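/- arXiv:2010.04175 — 2 statements merged into one kernel-verified Lean document; each statement's English description precedes it below -/
import Mathlib

section
/- Measuring the string register of a claw state in the Hadamard basis leaves a single-qubit state whose relative phase encodes the inner product of the measurement outcome with the XOR of the claw: for every n ∈ ℕ and all bit strings x₀, x₁, d ∈ {0,1}^n, contracting the second factor of e₀ ⊗ e_{x₀} + e₁ ⊗ e_{x₁} ∈ ℂ² ⊗ ℂ^{({0,1}^n)} with the vector H^{⊗n}·e_d yields 2^{−n/2} · ((−1)^{d·x₀} · e₀ + (−1)^{d·x₁} · e₁), which equals 2^{−n/2} · (−1)^{d·x₀} · (e₀ + (−1)^{d·(x₀ ⊕ x₁)} · e₁). Here d·x = Σᵢ dᵢ·xᵢ mod 2 and ⊕ denotes bitwise XOR. -/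
open Matrix

noncomputable section

/-- Standard basis vector of ℂ^T. -/
def ev {T : Type*} [DecidableEq T] (t : T) : T → ℂ := fun t' => if t' = t then 1 else 0

/-- Hadamard gate. -/
def Hgate : Matrix (Fin 2) (Fin 2) ℂ := (Real.sqrt 2 : ℂ)⁻¹ • !![1, 1; 1, -1]

/-- The n-fold Kronecker power H^{⊗n}, acting on ℂ^({0,1}^n) with the index set
of the Kronecker power identified with bit strings {0,1}^n. -/
def Hpow (n : ℕ) : Matrix (Fin n → Fin 2) (Fin n → Fin 2) ℂ :=
  Matrix.of fun d x => ∏ i, Hgate (d i) (x i)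

/-- The claw state e₀ ⊗ e_{x₀} + e₁ ⊗ e_{x₁} in ℂ² ⊗ ℂ^({0,1}^n). -/
def clawState {n : ℕ} (x₀ x₁ : Fin n → Fin 2) : Fin 2 × (Fin n → Fin 2) → ℂ :=
  fun p => ev (0 : Fin 2) p.1 * ev x₀ p.2 + ev (1 : Fin 2) p.1 * ev x₁ p.2


lemma Hgate_eq' (a c : Fin 2) :
    Hgate a c = (Real.sqrt 2 : ℂ)⁻¹ * (-1) ^ ((a : ℕ) * (c : ℕ)) := by
  fin_cases a <;> fin_cases c <;> simp [Hgate]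

lemma Hpow_eq' (n : ℕ) (x d : Fin n → Fin 2) :
    Hpow n x d = ((Real.sqrt 2 ^ n : ℝ)⁻¹ : ℂ) * (-1) ^ (∑ i, (d i : ℕ) * (x i : ℕ)) := by
  simp only [Hpow, Matrix.of_apply, Hgate_eq']
  rw [Finset.prod_mul_distrib, Finset.prod_const, Finset.prod_pow_eq_pow_sum]
  push_cast
  rw [inv_pow, Finset.card_univ, Fintype.card_fin]
  congr 2
  exact Finset.sum_congr rfl fun i _ => Nat.mul_comm _ _

lemma key2' (n : ℕ) (d x : Fin n → Fin 2) :
    (starRingEnd ℂ) ((Hpow n *ᵥ ev d) x)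
      = ((Real.sqrt 2 ^ n : ℝ)⁻¹ : ℂ) * (-1) ^ (∑ i, (x i : ℕ) * (d i : ℕ)) := by
  have h1 : (Hpow n *ᵥ ev d) x = Hpow n x d := by
    simp [mulVec, dotProduct, ev, mul_ite]
  rw [h1, Hpow_eq', _root_.map_mul, map_pow]
  simp only [map_neg, _root_.map_one, map_inv₀, Complex.conj_ofReal]
  congr 2
  exact Finset.sum_congr rfl fun i _ => Nat.mul_comm _ _

lemma parity_pow' (a : ℕ) : (-1 : ℂ) ^ a = (-1) ^ (a % 2) := by
  conv_lhs => rw [← Nat.div_add_mod a 2]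
  rw [pow_add, pow_mul]
  simp

lemma bit_parity' : ∀ a b c : Fin 2,
    ((a : ℕ) * (c : ℕ)) % 2 = ((a : ℕ) * (b : ℕ) + (a : ℕ) * ((b + c : Fin 2) : ℕ)) % 2 := by
  decide

lemma hB' (n : ℕ) (x₀ x₁ d : Fin n → Fin 2) :
    ((-1 : ℂ) ^ (∑ i, (d i : ℕ) * (x₁ i : ℕ)))
      = (-1) ^ (∑ i, (d i : ℕ) * (x₀ i : ℕ))
        * (-1) ^ (∑ i, (d i : ℕ) * ((x₀ i + x₁ i : Fin 2) : ℕ)) := by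
  rw [← pow_add, parity_pow', parity_pow' (_ + _)]
  congr 1
  rw [← Finset.sum_add_distrib, Finset.sum_nat_mod, Finset.sum_nat_mod
    (f := fun i => (d i : ℕ) * (x₀ i : ℕ) + (d i : ℕ) * ((x₀ i + x₁ i : Fin 2) : ℕ))]
  congr 1
  exact Finset.sum_congr rfl fun i _ => bit_parity' (d i) (x₀ i) (x₁ i)

/-- contracting the string register of a claw state with the
Hadamard-basis vector H^{⊗n} e_d yields
2^{-n/2}((−1)^{d·x₀} e₀ + (−1)^{d·x₁} e₁)
 = 2^{-n/2}(−1)^{d·x₀}(e₀ + (−1)^{d·(x₀⊕x₁)} e₁). -/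
theorem claw_state_hadamard_contraction (n : ℕ) (x₀ x₁ d : Fin n → Fin 2) :
    (fun b : Fin 2 =>
        star ((Hpow n).mulVec (ev d)) ⬝ᵥ fun x => clawState x₀ x₁ (b, x))
      = ((Real.sqrt 2 ^ n : ℝ)⁻¹ : ℂ) •
          (((-1 : ℂ) ^ (∑ i, (d i : ℕ) * (x₀ i : ℕ))) • ev (0 : Fin 2)
            + ((-1 : ℂ) ^ (∑ i, (d i : ℕ) * (x₁ i : ℕ))) • ev (1 : Fin 2)) ∧
    (fun b : Fin 2 =>
        star ((Hpow n).mulVec (ev d)) ⬝ᵥ fun x => clawState x₀ x₁ (b, x))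
      = (((Real.sqrt 2 ^ n : ℝ)⁻¹ : ℂ) * (-1 : ℂ) ^ (∑ i, (d i : ℕ) * (x₀ i : ℕ))) •
          (ev (0 : Fin 2)
            + ((-1 : ℂ) ^ (∑ i, (d i : ℕ) * ((x₀ i + x₁ i : Fin 2) : ℕ))) • ev (1 : Fin 2)) := by
  have h1 : (fun b : Fin 2 =>
        star ((Hpow n).mulVec (ev d)) ⬝ᵥ fun x => clawState x₀ x₁ (b, x))
      = ((Real.sqrt 2 ^ n : ℝ)⁻¹ : ℂ) •
          (((-1 : ℂ) ^ (∑ i, (d i : ℕ) * (x₀ i : ℕ))) • ev (0 : Fin 2)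
            + ((-1 : ℂ) ^ (∑ i, (d i : ℕ) * (x₁ i : ℕ))) • ev (1 : Fin 2)) := by
    funext b
    have expand : (fun x => clawState x₀ x₁ (b, x))
        = fun x => ev (0 : Fin 2) b * ev x₀ x + ev (1 : Fin 2) b * ev x₁ x := rfl
    rw [expand]
    fin_cases b <;>
      simp [dotProduct, ev, Finset.mul_sum, key2', mul_comm, ← Finset.sum_add_distrib]
  refine ⟨h1, ?_⟩
  rw [h1, hB' n x₀ x₁ d]
  funext b
  simp only [Pi.smul_apply, Pi.add_apply, smul_eq_mul]
  ring
end
end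

section
/- A bipartite density matrix whose marginal on one subsystem is pure must be a product state; in particular it is uncorrelated with the other subsystem: let m and n be finite types and let ρ be a complex matrix indexed by (m × n) × (m × n) that is positive semidefinite with trace 1. Define the marginals ρ_A(i, i') = Σ_{j} ρ((i,j), (i',j)) (a matrix indexed by m × m) and ρ_B(j, j') = Σ_{i} ρ((i,j), (i,j')) (a matrix indexed by n × n). If there exists a vector v ∈ ℂ^m with unit norm such that ρ_A = v·v† (i.e. ρ_A(i,i') = v(i)·conj(v(i')) for all i, i'), then ρ equals the Kronecker product ρ_A ⊗ₖ ρ_B, i.e. ρ((i,j), (i',j')) = ρ_A(i,i') · ρ_B(j,j') for all i, i', j, j'. -/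
open Matrix
open scoped ComplexOrder Kronecker

/-!
For the projection `Q = v v†` the hypothesis gives `tr (ρ (Q ⊗ 1)) = tr (ρ_A Q) = 1 = tr ρ`, so
the positive matrix `ρ` has zero trace against the complementary projection `1 - Q ⊗ 1` and is
therefore annihilated by it: `ρ = (Q ⊗ 1) ρ (Q ⊗ 1)`. Compressing by a rank-one projection in the
first factor always yields a product `Q ⊗ M`, and taking the second marginal identifies `M = ρ_B`.
-/

namespace Matrix

variable {R 𝕜 ι m n : Type*}

def traceRight [AddCommMonoid R] [Fintype n] (ρ : Matrix (m × n) (m × n) R) : Matrix m m R :=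
  fun i i' => ∑ j, ρ (i, j) (i', j)

def traceLeft [AddCommMonoid R] [Fintype m] (ρ : Matrix (m × n) (m × n) R) : Matrix n n R :=
  fun j j' => ∑ i, ρ (i, j) (i, j')

theorem traceLeft_kronecker [CommSemiring R] [Fintype m] (A : Matrix m m R) (B : Matrix n n R) :
    traceLeft (A ⊗ₖ B) = A.trace • B := by
  ext j j'
  simp [traceLeft, trace, Finset.sum_mul]

theorem trace_mul_kronecker_one [CommSemiring R] [Fintype m] [Fintype n] [DecidableEq n]
    (ρ : Matrix (m × n) (m × n) R) (A : Matrix m m R) :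
    (ρ * (A ⊗ₖ (1 : Matrix n n R))).trace = (traceRight ρ * A).trace := by
  simp only [trace, diag, mul_apply, kroneckerMap_apply, one_apply, traceRight,
    Fintype.sum_prod_type, mul_ite, mul_one, mul_zero, Finset.sum_ite_eq', Finset.mem_univ,
    if_true, Finset.sum_mul]
  exact Finset.sum_congr rfl fun i _ => Finset.sum_comm

theorem vecMulVec_kronecker_one_mul_mul [CommSemiring R] [Fintype m] [Fintype n] [DecidableEq n]
    (u w u' w' : m → R) (ρ : Matrix (m × n) (m × n) R) :
    (vecMulVec u w ⊗ₖ (1 : Matrix n n R)) * ρ * (vecMulVec u' w' ⊗ₖ (1 : Matrix n n R)) =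
      vecMulVec u w' ⊗ₖ of fun j j' => ∑ k, ∑ k', w k * ρ (k, j) (k', j') * u' k' := by
  ext ⟨a, b⟩ ⟨i, j⟩
  simp only [mul_apply, kroneckerMap_apply, one_apply, vecMulVec_apply, Fintype.sum_prod_type,
    mul_ite, ite_mul, mul_one, mul_zero, zero_mul, Finset.sum_ite_eq, Finset.sum_ite_eq',
    Finset.mem_univ, if_true, Finset.sum_mul, of_apply]
  rw [Finset.sum_comm, Finset.mul_sum]
  refine Finset.sum_congr rfl fun k _ => ?_
  rw [Finset.mul_sum]
  exact Finset.sum_congr rfl fun k' _ => by ring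

theorem IsStarProjection.kronecker [Fintype m] [Fintype ι] [CommSemiring R] [StarRing R]
    {P : Matrix m m R} {Q : Matrix ι ι R} (hP : IsStarProjection P) (hQ : IsStarProjection Q) :
    IsStarProjection (P ⊗ₖ Q) := by
  rw [isStarProjection_iff'] at hP hQ ⊢
  rw [← mul_kronecker_mul, hP.1, hQ.1, star_eq_conjTranspose, conjTranspose_kronecker,
    ← star_eq_conjTranspose, ← star_eq_conjTranspose, hP.2, hQ.2]
  exact ⟨rfl, rfl⟩

theorem isStarProjection_vecMulVec [Fintype m] [CommSemiring R] [StarRing R] {v : m → R}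
    (hv : star v ⬝ᵥ v = 1) : IsStarProjection (vecMulVec v (star v)) := by
  rw [isStarProjection_iff', vecMulVec_mul_vecMulVec, hv, one_smul, star_eq_conjTranspose,
    conjTranspose_vecMulVec, star_star]
  exact ⟨rfl, rfl⟩

theorem PosSemidef.mul_mul_eq_self_of_trace_mul_eq [RCLike 𝕜] [Fintype ι] [DecidableEq ι]
    {ρ P : Matrix ι ι 𝕜} (hρ : ρ.PosSemidef) (hP : IsStarProjection P)
    (htr : (ρ * P).trace = ρ.trace) : P * ρ * P = ρ := by
  have hPH : Pᴴ = P := hP.isSelfAdjoint.star_eq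
  have hN := hP.one_sub
  have hρN : ρ * (1 - P) = 0 := by
    obtain ⟨B, rfl⟩ : ∃ B : Matrix ι ι 𝕜, ρ = Bᴴ * B := by
      open scoped MatrixOrder in exact CStarAlgebra.nonneg_iff_eq_star_mul_self.mp hρ.nonneg
    -- `tr ((B (1 - P))ᴴ (B (1 - P))) = tr (ρ (1 - P)) = 0`
    rw [conjTranspose_mul_self_mul_eq_zero, ← trace_conjTranspose_mul_self_eq_zero_iff,
      conjTranspose_mul, ← star_eq_conjTranspose, hN.isSelfAdjoint.star_eq, mul_assoc,
      trace_mul_comm, mul_assoc, mul_assoc, hN.isIdempotentElem.eq, ← mul_assoc, mul_sub, mul_one,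
      trace_sub, htr, sub_self]
  have hright : ρ * P = ρ := by
    rw [mul_sub, mul_one, sub_eq_zero] at hρN
    exact hρN.symm
  have hleft : P * ρ = ρ := by
    have h := congrArg (·ᴴ) hright
    simp only [conjTranspose_mul, hPH, hρ.isHermitian.eq] at h
    exact h
  rw [hleft, hright]

end Matrix

/-- a bipartite density matrix whose marginal on the first
subsystem is a pure state v·v† must be the product of its marginals. -/
theorem pure_marginal_implies_product {m n : Type*}
    [Fintype m] [DecidableEq m] [Fintype n] [DecidableEq n]
    (ρ : Matrix (m × n) (m × n) ℂ)
    (hpos : ρ.PosSemidef) (htr : ρ.trace = 1)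
    (v : m → ℂ) (hv : star v ⬝ᵥ v = 1)
    (hA : ∀ i i' : m, (∑ j : n, ρ (i, j) (i', j)) = v i * star (v i')) :
    ∀ (i i' : m) (j j' : n),
      ρ (i, j) (i', j') =
        (∑ l : n, ρ (i, l) (i', l)) * (∑ k : m, ρ (k, j) (k, j')) := by
  set Q := vecMulVec v (star v)
  have hρA : traceRight ρ = Q := ext hA
  have hQ : IsStarProjection Q := isStarProjection_vecMulVec hv
  have htrQ : Q.trace = 1 := by rw [trace_vecMulVec, dotProduct_comm, hv]
  have hcompress : (Q ⊗ₖ 1) * ρ * (Q ⊗ₖ 1) = ρ := by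
    refine hpos.mul_mul_eq_self_of_trace_mul_eq (hQ.kronecker (.one _)) ?_
    rw [trace_mul_kronecker_one, hρA, hQ.isIdempotentElem.eq, htrQ, htr]
  obtain ⟨M, hρM⟩ : ∃ M, ρ = Q ⊗ₖ M :=
    ⟨_, hcompress.symm.trans (vecMulVec_kronecker_one_mul_mul ..)⟩
  have hρB : traceLeft ρ = M := by
    rw [hρM, traceLeft_kronecker, htrQ, one_smul]
  have hproduct : ρ = traceRight ρ ⊗ₖ traceLeft ρ := by
    rw [hρA, hρB]
    exact hρM
  intro i i' j j'
  exact congrFun (congrFun hproduct (i, j)) (i', j')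
end
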